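/- Let L ∈ C(x)[D] be a first-order operator, g a nonzero Laurent series solution of L, h ∈ C((x)) a nonzero D-finite series, and Q ∈ C(x)[D] a minimal-order annihilator of h. Then the symmetric product L ⊗ Q is a minimal-order annihilator of g·h. (Equivalently: ord of any annihilator of g·h is at least ord(Q).) -/

import Mathlib

/-- The formal derivative of a Laurent series. -/
noncomputable def laurentDeriv {F : Type*} [Field F] (f : LaurentSeries F) :
    LaurentSeries F where
  coeff n := ((n + 1 : ℤ) : F) * f.coeff (n + 1)
  isPWO_support' := by
    have hsub : (Function.support fun n : ℤ => ((n + 1 : ℤ) : F) * f.coeff (n + 1)) ⊆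
        (fun m : ℤ => m - 1) '' (Function.support f.coeff) := by
      intro n hn
      simp only [Function.mem_support] at hn
      refine ⟨n + 1, fun h0 => hn (by simp [h0]), by ring⟩
    exact (f.isPWO_support'.image_of_monotone
      (fun x y hxy => by simpa using sub_le_sub_right hxy 1)).mono hsub

open scoped RatFunc

/-- The action of an operator `P = ∑ pᵢ Dⁱ ∈ C(x)[D]` on a formal Laurent series. -/
noncomputable def opApplyLS {F : Type*} [Field F] (P : Polynomial (RatFunc F))
    (f : LaurentSeries F) : LaurentSeries F :=
  ∑ i ∈ Finset.range (P.natDegree + 1),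
    algebraMap (RatFunc F) (LaurentSeries F) (P.coeff i) * laurentDeriv^[i] f

namespace MinAnnAux

open Polynomial HahnSeries Finset

variable {F : Type*} [Field F]

@[simp] lemma laurentDeriv_coeff (f : LaurentSeries F) (n : ℤ) :
    (laurentDeriv f).coeff n = ((n + 1 : ℤ) : F) * f.coeff (n + 1) := rfl

lemma laurentDeriv_add (f g : LaurentSeries F) :
    laurentDeriv (f + g) = laurentDeriv f + laurentDeriv g := by
  ext n
  simp [mul_add]

lemma laurentDeriv_zero : laurentDeriv (0 : LaurentSeries F) = 0 := by
  ext n; simp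

lemma laurentDeriv_support_subset (f : LaurentSeries F) :
    (laurentDeriv f).support ⊆ (fun m : ℤ => m - 1) '' f.support := by
  intro n hn
  simp only [HahnSeries.mem_support, laurentDeriv_coeff] at hn
  exact ⟨n + 1, fun h0 => hn (by simp [h0]), by ring⟩

/-- coefficient of a product over enlarged index sets -/
lemma mul_coeff_enlarged {f g : LaurentSeries F} {s t : Set ℤ} (hs : s.IsPWO) (ht : t.IsPWO)
    (hfs : f.support ⊆ s) (hgt : g.support ⊆ t) (a : ℤ) :
    (f * g).coeff a = ∑ ij ∈ Finset.antidiagonal hs ht a, f.coeff ij.1 * g.coeff ij.2 := by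
  rw [HahnSeries.coeff_mul]
  refine Finset.sum_subset (fun ij hij => ?_) (fun ij hij hij' => ?_)
  · rw [Finset.mem_antidiagonal] at hij ⊢
    exact ⟨hfs hij.1, hgt hij.2.1, hij.2.2⟩
  · rw [Finset.mem_antidiagonal] at hij hij'
    by_cases h1 : f.coeff ij.1 = 0
    · exact mul_eq_zero_of_left h1 _
    · by_cases h2 : g.coeff ij.2 = 0
      · exact mul_eq_zero_of_right _ h2
      · exact absurd ⟨h1, h2, hij.2.2⟩ hij'

lemma laurentDeriv_mul (f g : LaurentSeries F) :
    laurentDeriv (f * g) = laurentDeriv f * g + f * laurentDeriv g := by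
  classical
  set s : Set ℤ := f.support ∪ (fun m : ℤ => m - 1) '' f.support with hs_def
  set t : Set ℤ := g.support ∪ (fun m : ℤ => m - 1) '' g.support with ht_def
  have himg : ∀ u : LaurentSeries F, (((fun m : ℤ => m - 1) '' u.support) : Set ℤ).IsPWO :=
    fun u => u.isPWO_support'.image_of_monotone
      (fun x y hxy => by simpa using sub_le_sub_right hxy 1)
  have hs : s.IsPWO := f.isPWO_support.union (himg f)
  have ht : t.IsPWO := g.isPWO_support.union (himg g)
  have hfs : f.support ⊆ s := Set.subset_union_left
  have hgt : g.support ⊆ t := Set.subset_union_left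
  have hfs' : (laurentDeriv f).support ⊆ s :=
    (laurentDeriv_support_subset f).trans Set.subset_union_right
  have hgt' : (laurentDeriv g).support ⊆ t :=
    (laurentDeriv_support_subset g).trans Set.subset_union_right
  ext n
  rw [HahnSeries.coeff_add, laurentDeriv_coeff,
    mul_coeff_enlarged hs ht hfs hgt (n + 1),
    mul_coeff_enlarged hs ht hfs' hgt n,
    mul_coeff_enlarged hs ht hfs hgt' n]
  have shift_left : (∑ ij ∈ Finset.antidiagonal hs ht n,
        (laurentDeriv f).coeff ij.1 * g.coeff ij.2)
      = ∑ ij ∈ Finset.antidiagonal hs ht (n + 1),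
        ((ij.1 : F) * f.coeff ij.1) * g.coeff ij.2 := by
    refine Finset.sum_bij_ne_zero (fun ij _ _ => (ij.1 + 1, ij.2)) ?_ ?_ ?_ ?_
    · intro ij hij hne
      rw [Finset.mem_antidiagonal] at hij ⊢
      have h1 : f.coeff (ij.1 + 1) ≠ 0 := by
        intro h0
        exact hne (by simp [laurentDeriv_coeff, h0])
      exact ⟨hfs h1, hij.2.1, by omega⟩
    · intro a ha hna b hb hnb h
      rw [Prod.mk.injEq] at h
      exact Prod.ext (by omega) h.2
    · intro ij hij hne
      rw [Finset.mem_antidiagonal] at hij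
      have h1 : f.coeff ij.1 ≠ 0 := by
        intro h0; exact hne (by simp [h0])
      refine ⟨(ij.1 - 1, ij.2), ?_, ?_, ?_⟩
      · rw [Finset.mem_antidiagonal]
        exact ⟨Or.inr ⟨ij.1, h1, rfl⟩, hij.2.1, by omega⟩
      · simp only [laurentDeriv_coeff]
        have : ij.1 - 1 + 1 = ij.1 := by ring
        rw [this]
        intro h0
        apply hne
        push_cast at h0 ⊢
        linear_combination h0
      · dsimp only
        exact Prod.ext (by omega) rfl
    · intro ij hij hne
      simp only [laurentDeriv_coeff]
  have shift_right : (∑ ij ∈ Finset.antidiagonal hs ht n,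
        f.coeff ij.1 * (laurentDeriv g).coeff ij.2)
      = ∑ ij ∈ Finset.antidiagonal hs ht (n + 1),
        f.coeff ij.1 * ((ij.2 : F) * g.coeff ij.2) := by
    refine Finset.sum_bij_ne_zero (fun ij _ _ => (ij.1, ij.2 + 1)) ?_ ?_ ?_ ?_
    · intro ij hij hne
      rw [Finset.mem_antidiagonal] at hij ⊢
      have h1 : g.coeff (ij.2 + 1) ≠ 0 := by
        intro h0
        exact hne (by simp [laurentDeriv_coeff, h0])
      exact ⟨hij.1, hgt h1, by omega⟩
    · intro a ha hna b hb hnb h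
      rw [Prod.mk.injEq] at h
      exact Prod.ext h.1 (by omega)
    · intro ij hij hne
      rw [Finset.mem_antidiagonal] at hij
      have h1 : g.coeff ij.2 ≠ 0 := by
        intro h0; exact hne (by simp [h0])
      refine ⟨(ij.1, ij.2 - 1), ?_, ?_, ?_⟩
      · rw [Finset.mem_antidiagonal]
        exact ⟨hij.1, Or.inr ⟨ij.2, h1, rfl⟩, by omega⟩
      · simp only [laurentDeriv_coeff]
        have : ij.2 - 1 + 1 = ij.2 := by ring
        rw [this]
        intro h0
        apply hne
        push_cast at h0 ⊢
        linear_combination h0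
      · dsimp only
        exact Prod.ext rfl (by omega)
    · intro ij hij hne
      simp only [laurentDeriv_coeff]
  rw [shift_left, shift_right, ← Finset.sum_add_distrib, Finset.mul_sum]
  refine Finset.sum_congr rfl (fun ij hij => ?_)
  rw [Finset.mem_antidiagonal] at hij
  have : ((n + 1 : ℤ) : F) = ((ij.1 : F) + (ij.2 : F)) := by
    rw [← hij.2.2]; push_cast; ring
  rw [this]; ring

section Rat

open RatFunc LaurentSeries

local notation "φ" => algebraMap (RatFunc F) (LaurentSeries F)
local notation "ψ" => algebraMap (Polynomial F) (RatFunc F)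

lemma phi_eq_coe (ρ : RatFunc F) : φ ρ = (ρ : LaurentSeries F) := rfl

lemma coe_poly_coeff (p : Polynomial F) (n : ℤ) :
    ((ψ p : RatFunc F) : LaurentSeries F).coeff n
      = if n < 0 then 0 else p.coeff n.natAbs := by
  have : (ψ p : RatFunc F) = (p : RatFunc F) := rfl
  rw [this, ← RatFunc.coe_coe, PowerSeries.coeff_coe]
  simp [Polynomial.coeff_coe]

lemma laurentDeriv_coe_poly (p : Polynomial F) :
    laurentDeriv ((ψ p : RatFunc F) : LaurentSeries F)
      = ((ψ (Polynomial.derivative p) : RatFunc F) : LaurentSeries F) := by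
  ext n
  rw [laurentDeriv_coeff, coe_poly_coeff, coe_poly_coeff]
  by_cases hn : 0 ≤ n
  · lift n to ℕ using hn with m
    rw [if_neg (by omega), if_neg (by omega), Polynomial.coeff_derivative]
    have h1 : ((m : ℤ) + 1).natAbs = m + 1 := by omega
    have h2 : ((m : ℤ)).natAbs = m := by omega
    rw [h1, h2]
    push_cast
    ring
  · rw [if_pos (by omega : n < 0)]
    by_cases hn1 : n + 1 < 0
    · rw [if_pos hn1, mul_zero]
    · have hne : n = -1 := by omega
      subst hne
      norm_num

noncomputable def ratDeriv (ρ : RatFunc F) : RatFunc F :=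
  (algebraMap (Polynomial F) (RatFunc F) (Polynomial.derivative ρ.num)
      - ρ * algebraMap (Polynomial F) (RatFunc F) (Polynomial.derivative ρ.denom))
    / algebraMap (Polynomial F) (RatFunc F) ρ.denom

lemma coe_denom_ne_zero (ρ : RatFunc F) : ((ψ ρ.denom : RatFunc F) : LaurentSeries F) ≠ 0 := by
  intro h
  have h2 : (ψ ρ.denom : RatFunc F) = 0 := (algebraMap (RatFunc F) (LaurentSeries F)).injective (by simpa using h)
  exact RatFunc.algebraMap_ne_zero (RatFunc.denom_ne_zero ρ) h2

lemma coe_ratDeriv (ρ : RatFunc F) :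
    ((ratDeriv ρ : RatFunc F) : LaurentSeries F) = laurentDeriv (ρ : LaurentSeries F) := by
  have hq : ((ψ ρ.denom : RatFunc F) : LaurentSeries F) ≠ 0 := coe_denom_ne_zero ρ
  have key : (ρ : LaurentSeries F) * ((ψ ρ.denom : RatFunc F) : LaurentSeries F)
      = ((ψ ρ.num : RatFunc F) : LaurentSeries F) := by
    rw [← map_mul]
    congr 1
    have hd := RatFunc.algebraMap_ne_zero (K := F) (RatFunc.denom_ne_zero ρ)
    have h2 : (ψ ρ.num : RatFunc F) / ψ ρ.denom * ψ ρ.denom = ψ ρ.num :=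
      div_mul_cancel₀ _ hd
    rwa [RatFunc.num_div_denom] at h2
  have key2 := congrArg laurentDeriv key
  rw [laurentDeriv_mul, laurentDeriv_coe_poly, laurentDeriv_coe_poly] at key2
  have solved : laurentDeriv (ρ : LaurentSeries F)
      = (((ψ (Polynomial.derivative ρ.num) : RatFunc F) : LaurentSeries F)
          - (ρ : LaurentSeries F) * ((ψ (Polynomial.derivative ρ.denom) : RatFunc F)
            : LaurentSeries F)) / ((ψ ρ.denom : RatFunc F) : LaurentSeries F) := by
    rw [eq_div_iff hq]
    rw [← key2]
    ring
  rw [solved, ratDeriv]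
  push_cast
  rfl

lemma ratDeriv_zero : ratDeriv (0 : RatFunc F) = 0 := by
  apply (algebraMap (RatFunc F) (LaurentSeries F)).injective
  rw [coe_ratDeriv]
  simp [laurentDeriv_zero]

lemma ratDeriv_add (a b : RatFunc F) : ratDeriv (a + b) = ratDeriv a + ratDeriv b := by
  apply (algebraMap (RatFunc F) (LaurentSeries F)).injective
  rw [map_add, coe_ratDeriv, coe_ratDeriv, coe_ratDeriv, map_add,
    laurentDeriv_add]

noncomputable def op (P : Polynomial (RatFunc F)) (f : LaurentSeries F) : LaurentSeries F :=
  P.sum fun n a => φ a * laurentDeriv^[n] f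

lemma opApplyLS_eq_op (P : Polynomial (RatFunc F)) (f : LaurentSeries F) :
    opApplyLS P f = op P f :=
  (Polynomial.sum_over_range P (f := fun n a => φ a * laurentDeriv^[n] f)
    (fun n => by simp)).symm

lemma op_add (P R : Polynomial (RatFunc F)) (f : LaurentSeries F) :
    op (P + R) f = op P f + op R f :=
  Polynomial.sum_add_index _ _ _ (fun n => by simp) (fun n a b => by rw [map_add, add_mul])

lemma op_monomial (n : ℕ) (a : RatFunc F) (f : LaurentSeries F) :
    op (Polynomial.monomial n a) f = φ a * laurentDeriv^[n] f :=
  Polynomial.sum_monomial_index _ _ (by simp)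

lemma op_one (f : LaurentSeries F) : op (1 : Polynomial (RatFunc F)) f = f := by
  rw [← Polynomial.monomial_zero_one, op_monomial]
  simp

lemma op_zero (f : LaurentSeries F) : op (0 : Polynomial (RatFunc F)) f = 0 := by
  simp [op, Polynomial.sum_zero_index]

lemma op_C_mul (a : RatFunc F) (P : Polynomial (RatFunc F)) (f : LaurentSeries F) :
    op (Polynomial.C a * P) f = φ a * op P f := by
  induction P using Polynomial.induction_on' with
  | add p q hp hq => rw [mul_add, op_add, op_add, hp, hq, mul_add]
  | monomial n b => rw [Polynomial.C_mul_monomial, op_monomial, op_monomial, map_mul, mul_assoc]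

noncomputable def dR (P : Polynomial (RatFunc F)) : Polynomial (RatFunc F) :=
  P.sum fun n a => Polynomial.C (ratDeriv a) * Polynomial.X ^ n

lemma dR_monomial (n : ℕ) (a : RatFunc F) :
    dR (Polynomial.monomial n a) = Polynomial.monomial n (ratDeriv a) := by
  rw [dR, Polynomial.sum_monomial_index _ _ (by simp [ratDeriv_zero]),
    Polynomial.C_mul_X_pow_eq_monomial]

lemma dR_add (P R : Polynomial (RatFunc F)) : dR (P + R) = dR P + dR R :=
  Polynomial.sum_add_index _ _ _ (fun n => by simp [ratDeriv_zero])
    (fun n a b => by rw [ratDeriv_add, map_add, add_mul])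

lemma laurentDeriv_op (P : Polynomial (RatFunc F)) (f : LaurentSeries F) :
    laurentDeriv (op P f) = op (dR P) f + op (Polynomial.X * P) f := by
  induction P using Polynomial.induction_on' with
  | add p q hp hq =>
    rw [op_add, laurentDeriv_add, hp, hq, dR_add, mul_add, op_add, op_add]
    ring
  | monomial n a =>
    rw [op_monomial, laurentDeriv_mul, dR_monomial, Polynomial.X_mul_monomial,
      op_monomial, op_monomial, Function.iterate_succ_apply',
      phi_eq_coe (ratDeriv a), phi_eq_coe a, coe_ratDeriv]

noncomputable def Tpow (σ : RatFunc F) : ℕ → Polynomial (RatFunc F)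
  | 0 => 1
  | n + 1 => dR (Tpow σ n) + (Polynomial.X + Polynomial.C σ) * Tpow σ n

lemma iter_deriv_mul (σ : RatFunc F) {g : LaurentSeries F}
    (hg : laurentDeriv g = φ σ * g) (n : ℕ) (f : LaurentSeries F) :
    laurentDeriv^[n] (g * f) = g * op (Tpow σ n) f := by
  induction n with
  | zero => simp [Tpow, op_one]
  | succ n ih =>
    rw [Function.iterate_succ_apply', ih, laurentDeriv_mul, hg, laurentDeriv_op, Tpow,
      add_mul, op_add, op_add, op_C_mul]
    ring

noncomputable def twist (σ : RatFunc F) (P : Polynomial (RatFunc F)) :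
    Polynomial (RatFunc F) :=
  P.sum fun n a => Polynomial.C a * Tpow σ n

lemma twist_monomial (σ : RatFunc F) (n : ℕ) (a : RatFunc F) :
    twist σ (Polynomial.monomial n a) = Polynomial.C a * Tpow σ n :=
  Polynomial.sum_monomial_index _ _ (by simp)

lemma twist_add (σ : RatFunc F) (P R : Polynomial (RatFunc F)) :
    twist σ (P + R) = twist σ P + twist σ R :=
  Polynomial.sum_add_index _ _ _ (fun n => by simp) (fun n a b => by rw [map_add, add_mul])

lemma twist_zero (σ : RatFunc F) : twist σ (0 : Polynomial (RatFunc F)) = 0 := by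
  simp [twist, Polynomial.sum_zero_index]

lemma op_twist (σ : RatFunc F) {g : LaurentSeries F}
    (hg : laurentDeriv g = φ σ * g) (P : Polynomial (RatFunc F)) (f : LaurentSeries F) :
    op P (g * f) = g * op (twist σ P) f := by
  induction P using Polynomial.induction_on' with
  | add p q hp hq => rw [op_add, hp, hq, twist_add, op_add, mul_add]
  | monomial n a =>
    rw [op_monomial, iter_deriv_mul σ hg, twist_monomial, op_C_mul]
    ring

open Polynomial in
lemma degree_dR_le (P : Polynomial (RatFunc F)) : (dR P).degree ≤ P.degree := by
  refine (Polynomial.degree_sum_le _ _).trans ?_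
  refine Finset.sup_le fun n hn => ?_
  refine (Polynomial.degree_mul_le _ _).trans ?_
  refine le_trans (add_le_add Polynomial.degree_C_le (le_of_eq (Polynomial.degree_X_pow n))) ?_
  rw [zero_add]
  exact Polynomial.le_degree_of_ne_zero (Polynomial.mem_support_iff.mp hn)

lemma Tpow_degree (σ : RatFunc F) (n : ℕ) :
    (Tpow σ n).degree ≤ n ∧ (Tpow σ n - Polynomial.X ^ n).degree < (n : WithBot ℕ) := by
  induction n with
  | zero =>
    constructor
    · simp only [Tpow]; exact Polynomial.degree_one_le.trans (by simp)
    · simp [Tpow]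
  | succ n ih =>
    have hT : (Tpow σ (n + 1)) - Polynomial.X ^ (n + 1)
        = dR (Tpow σ n) + Polynomial.C σ * Tpow σ n
          + Polynomial.X * (Tpow σ n - Polynomial.X ^ n) := by
      rw [Tpow]; ring
    have hd1 : (dR (Tpow σ n)).degree < ((n + 1 : ℕ) : WithBot ℕ) :=
      lt_of_le_of_lt ((degree_dR_le _).trans ih.1) (by exact_mod_cast Nat.lt_succ_self n)
    have hd2 : (Polynomial.C σ * Tpow σ n).degree < ((n + 1 : ℕ) : WithBot ℕ) := by
      refine lt_of_le_of_lt (Polynomial.degree_mul_le _ _) ?_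
      refine lt_of_le_of_lt (add_le_add Polynomial.degree_C_le ih.1) ?_
      rw [zero_add]
      exact_mod_cast Nat.lt_succ_self n
    have hd3 : (Polynomial.X * (Tpow σ n - Polynomial.X ^ n)).degree
        < ((n + 1 : ℕ) : WithBot ℕ) := by
      rw [Polynomial.degree_mul, Polynomial.degree_X]
      have hcast : ((n + 1 : ℕ) : WithBot ℕ) = 1 + (n : WithBot ℕ) := by
        push_cast; ring
      rw [hcast]
      exact WithBot.add_lt_add_left (by simp) ih.2
    have hsub : (Tpow σ (n + 1) - Polynomial.X ^ (n + 1)).degree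
        < ((n + 1 : ℕ) : WithBot ℕ) := by
      rw [hT]
      refine lt_of_le_of_lt (Polynomial.degree_add_le _ _) (max_lt ?_ hd3)
      exact lt_of_le_of_lt (Polynomial.degree_add_le _ _) (max_lt hd1 hd2)
    refine ⟨?_, hsub⟩
    have heq : Tpow σ (n + 1)
        = (Tpow σ (n + 1) - Polynomial.X ^ (n + 1)) + Polynomial.X ^ (n + 1) := by ring
    rw [heq]
    exact (Polynomial.degree_add_le _ _).trans
      (max_le hsub.le (le_of_eq (Polynomial.degree_X_pow _)))

lemma twist_sub_degree (σ : RatFunc F) (P : Polynomial (RatFunc F)) (hP : P ≠ 0) :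
    (twist σ P - P).degree < P.degree := by
  have hrw : twist σ P - P
      = ∑ n ∈ P.support, Polynomial.C (P.coeff n) * (Tpow σ n - Polynomial.X ^ n) := by
    have hsplit : ∑ n ∈ P.support, Polynomial.C (P.coeff n) * (Tpow σ n - Polynomial.X ^ n)
        = (∑ n ∈ P.support, Polynomial.C (P.coeff n) * Tpow σ n)
          - ∑ n ∈ P.support, Polynomial.C (P.coeff n) * Polynomial.X ^ n := by
      rw [← Finset.sum_sub_distrib]
      exact Finset.sum_congr rfl fun n _ => by ring
    rw [twist, Polynomial.sum_def, hsplit, sub_right_inj]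
    conv_lhs => rw [← Polynomial.sum_C_mul_X_pow_eq P, Polynomial.sum_def]
  have hbot : (⊥ : WithBot ℕ) < P.degree := by
    refine lt_of_le_of_ne bot_le ?_
    exact fun h => hP (Polynomial.degree_eq_bot.mp h.symm)
  rw [hrw]
  refine lt_of_le_of_lt (Polynomial.degree_sum_le _ _) ?_
  rw [Finset.sup_lt_iff hbot]
  intro n hn
  refine lt_of_le_of_lt (Polynomial.degree_mul_le _ _) ?_
  refine lt_of_le_of_lt (add_le_add Polynomial.degree_C_le (le_refl _)) ?_
  rw [zero_add]
  exact lt_of_lt_of_le (Tpow_degree σ n).2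
    (Polynomial.le_degree_of_ne_zero (Polynomial.mem_support_iff.mp hn))

lemma twist_degree (σ : RatFunc F) (P : Polynomial (RatFunc F)) :
    (twist σ P).degree = P.degree := by
  by_cases hP : P = 0
  · rw [hP, twist_zero]
  · have heq : twist σ P = P + (twist σ P - P) := by ring
    rw [heq, Polynomial.degree_add_eq_left_of_degree_lt (twist_sub_degree σ P hP)]

lemma twist_ne_zero (σ : RatFunc F) {P : Polynomial (RatFunc F)} (hP : P ≠ 0) :
    twist σ P ≠ 0 := by
  intro h
  apply hP
  rw [← Polynomial.degree_eq_bot, ← twist_degree σ P, h, Polynomial.degree_eq_bot]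

lemma twist_natDegree (σ : RatFunc F) (P : Polynomial (RatFunc F)) :
    (twist σ P).natDegree = P.natDegree :=
  Polynomial.natDegree_eq_of_degree_eq (twist_degree σ P)

lemma twist_surj (σ : RatFunc F) :
    ∀ (n : ℕ) (R : Polynomial (RatFunc F)), R.degree < (n : WithBot ℕ) →
      ∃ S, twist σ S = R := by
  intro n
  induction n with
  | zero =>
    intro R hR
    have : R = 0 := by
      by_contra h
      rw [Polynomial.degree_eq_natDegree h] at hR
      exact absurd hR (by exact_mod_cast Nat.not_lt_zero _)
    exact ⟨0, by rw [twist_zero, this]⟩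
  | succ n ih =>
    intro R hR
    by_cases hR0 : R = 0
    · exact ⟨0, by rw [twist_zero, hR0]⟩
    · have hRn : R.degree ≤ (n : WithBot ℕ) := by
        rw [Polynomial.degree_eq_natDegree hR0] at hR ⊢
        exact_mod_cast Nat.lt_succ_iff.mp (by exact_mod_cast hR)
      have herr : (-(twist σ R - R)).degree < (n : WithBot ℕ) := by
        rw [Polynomial.degree_neg]
        exact lt_of_lt_of_le (twist_sub_degree σ R hR0) hRn
      obtain ⟨S₁, hS₁⟩ := ih _ herr
      refine ⟨R + S₁, ?_⟩
      rw [twist_add, hS₁]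
      ring

end Rat
end MinAnnAux


open MinAnnAux in
/-- Let `L ∈ C(x)[D]` be first order, `g ≠ 0` a Laurent series solution of `L`,
`h ≠ 0` a D-finite Laurent series, and `Q` a minimal-order annihilator of `h`.  Then the
symmetric product `L ⊗ Q` — an annihilator of `g·h` of order `ord(Q)` — is a minimal-order
annihilator of `g·h`: there is an annihilator of `g·h` of order `ord(Q)`, and every nonzero
annihilator of `g·h` has order at least `ord(Q)`. -/
theorem min_annihilator_of_hyperexponential_product
    (F : Type*) [Field F] [IsAlgClosed F] [CharZero F]
    (L Q : Polynomial (RatFunc F)) (hL : L.natDegree = 1)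
    (g h : LaurentSeries F) (hg0 : g ≠ 0) (hgL : opApplyLS L g = 0)
    (hh0 : h ≠ 0) (hQ0 : Q ≠ 0) (hQh : opApplyLS Q h = 0)
    (hQmin : ∀ R : Polynomial (RatFunc F), R ≠ 0 → opApplyLS R h = 0 →
      Q.natDegree ≤ R.natDegree) :
    (∃ S : Polynomial (RatFunc F), S ≠ 0 ∧ opApplyLS S (g * h) = 0 ∧
        S.natDegree = Q.natDegree) ∧
      ∀ M : Polynomial (RatFunc F), M ≠ 0 → opApplyLS M (g * h) = 0 →
        Q.natDegree ≤ M.natDegree := by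
  classical
  set φ := algebraMap (RatFunc F) (LaurentSeries F) with hφdef
  have hL0 : L ≠ 0 := fun hz => by simp [hz] at hL
  have hL1 : L.coeff 1 ≠ 0 := by
    have hlc := Polynomial.leadingCoeff_ne_zero.mpr hL0
    rwa [Polynomial.leadingCoeff, hL] at hlc
  have hφL1 : φ (L.coeff 1) ≠ 0 :=
    (map_ne_zero_iff φ (RingHom.injective φ)).mpr hL1
  have hexp : opApplyLS L g = φ (L.coeff 0) * g + φ (L.coeff 1) * laurentDeriv g := by
    rw [opApplyLS, hL, Finset.sum_range_succ, Finset.sum_range_one]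
    simp [hφdef]
  set ρ : RatFunc F := -(L.coeff 0 / L.coeff 1) with hρdef
  have hg' : laurentDeriv g = φ ρ * g := by
    have h0 : φ (L.coeff 0) * g + φ (L.coeff 1) * laurentDeriv g = 0 := by
      rw [← hexp, hgL]
    have key : φ (L.coeff 1) * laurentDeriv g = -(φ (L.coeff 0) * g) := by
      linear_combination h0
    rw [hρdef, map_neg, map_div₀]
    apply mul_left_cancel₀ hφL1
    have hc : φ (L.coeff 1) * (φ (L.coeff 0) / φ (L.coeff 1)) = φ (L.coeff 0) := by
      rw [mul_comm]
      exact div_mul_cancel₀ _ hφL1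
    rw [key]
    linear_combination g * hc
  have hQdeg : Q.degree < ((Q.natDegree + 1 : ℕ) : WithBot ℕ) :=
    lt_of_le_of_lt Polynomial.degree_le_natDegree (by exact_mod_cast Nat.lt_succ_self _)
  obtain ⟨S, hS⟩ := twist_surj ρ (Q.natDegree + 1) Q hQdeg
  have hS0 : S ≠ 0 := fun hz => hQ0 (by rw [← hS, hz, twist_zero])
  have hSdeg : S.natDegree = Q.natDegree := by rw [← twist_natDegree ρ S, hS]
  have hSann : opApplyLS S (g * h) = 0 := by
    rw [opApplyLS_eq_op, op_twist ρ hg' S h, hS, ← opApplyLS_eq_op, hQh, mul_zero]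
  refine ⟨⟨S, hS0, hSann, hSdeg⟩, ?_⟩
  intro M hM0 hMann
  have hzero : g * op (twist ρ M) h = 0 := by
    rw [← op_twist ρ hg' M h, ← opApplyLS_eq_op, hMann]
  have h2 : op (twist ρ M) h = 0 := by
    rcases mul_eq_zero.mp hzero with hz | hz
    · exact absurd hz hg0
    · exact hz
  have hfin := hQmin (twist ρ M) (twist_ne_zero ρ hM0)
    (by rw [opApplyLS_eq_op]; exact h2)
  rwa [twist_natDegree] at hfin
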